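/- arXiv:2604.17198 — 3 statements merged into one kernel-verified Lean document; each statement's English description precedes it below -/
import Mathlib

section
/- (Theorem 3.1, tightness of partitioning) Let C be a monotone, zero-based, hierarchically consistent cost family on d dimensions, let Δ be a last-level gap bound for the family, and let Q < C_0(N 0). Then x̄ = FindPartition(Q) satisfies C(x̄) ≤ Q and Q − C(x̄) < Δ. -/
/-! The greedy choice preserves the invariant `R_m < C_m(N_m | x_0, …, x_{m-1})`. At level `0`
it is the hypothesis on `Q`. By hierarchical consistency,
`C_{m+1}(N_{m+1} | …, x_m) = C_m(x_m + 1) - C_m(x_m)`, and this exceeds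
`R_m - C_m(x_m) = R_{m+1}` because `x_m` is maximal (or `x_m + 1 = N_m`, where the invariant
applies). Since `0` is always a candidate, `C_m(x_m) ≤ R_m`, so the total cost telescopes to
`Q - R_d`, and at the last level `R_d < C_{d-1}(x_{d-1} + 1) - C_{d-1}(x_{d-1}) ≤ Δ`. -/

noncomputable section

open scoped Classical
open Finset

namespace Nacho

/-- A prefix `p` is valid up to length `m` if its entries below `m` are within the extents. -/
def ValidPrefix {d : ℕ} (N : Fin d → ℕ) (m : ℕ) (p : Fin d → ℕ) : Prop :=
  ∀ k : Fin d, (k : ℕ) < m → p k < N k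

/-- A family of cost functions only depends on the prefix below its level. -/
def PrefixDep {d : ℕ} (C : Fin d → (Fin d → ℕ) → ℕ → ℕ) : Prop :=
  ∀ (m : Fin d) (p p' : Fin d → ℕ) (x : ℕ),
    (∀ k : Fin d, (k : ℕ) < (m : ℕ) → p k = p' k) → C m p x = C m p' x

/-- Monotone cost family. -/
def IsMonotoneFam {d : ℕ} (N : Fin d → ℕ) (C : Fin d → (Fin d → ℕ) → ℕ → ℕ) : Prop :=
  ∀ (m : Fin d) (p : Fin d → ℕ), ValidPrefix N (m : ℕ) p →
    ∀ x : ℕ, x < N m → C m p x ≤ C m p (x + 1)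

/-- Zero-based cost family. -/
def IsZeroBased {d : ℕ} (N : Fin d → ℕ) (C : Fin d → (Fin d → ℕ) → ℕ → ℕ) : Prop :=
  ∀ (m : Fin d) (p : Fin d → ℕ), ValidPrefix N (m : ℕ) p → C m p 0 = 0

/-- Hierarchically consistent cost family. -/
def IsHierConsistent {d : ℕ} (N : Fin d → ℕ) (C : Fin d → (Fin d → ℕ) → ℕ → ℕ) : Prop :=
  ∀ (m : Fin d) (h : (m : ℕ) + 1 < d) (p : Fin d → ℕ), ValidPrefix N (m : ℕ) p →
    ∀ x : ℕ, x < N m →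
      C m p (x + 1)
        = C m p x + C ⟨(m : ℕ) + 1, h⟩ (Function.update p m x) (N ⟨(m : ℕ) + 1, h⟩)

/-- One step of the hierarchical search: at level `m`, pick the greatest in-range coordinate
whose cost does not exceed the residual, record it, and subtract its cost. -/
def partStep {d : ℕ} (N : Fin d → ℕ) (C : Fin d → (Fin d → ℕ) → ℕ → ℕ) (m : ℕ)
    (st : (Fin d → ℕ) × ℕ) : (Fin d → ℕ) × ℕ :=
  if h : m < d then
    let x := Nat.findGreatest (fun y => C ⟨m, h⟩ st.1 y ≤ st.2) (N ⟨m, h⟩ - 1)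
    (Function.update st.1 ⟨m, h⟩ x, st.2 - C ⟨m, h⟩ st.1 x)
  else st

/-- Partially-built coordinate and residual after the first `m` levels of `FindPartition`. -/
def partState {d : ℕ} (N : Fin d → ℕ) (C : Fin d → (Fin d → ℕ) → ℕ → ℕ) (Q : ℕ) :
    ℕ → (Fin d → ℕ) × ℕ
  | 0 => (fun _ => 0, Q)
  | m + 1 => partStep N C m (partState N C Q m)

/-- `FindPartition` of the hierarchical search partitioning algorithm. -/
def findPartition {d : ℕ} (N : Fin d → ℕ) (C : Fin d → (Fin d → ℕ) → ℕ → ℕ) (Q : ℕ) :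
    Fin d → ℕ :=
  (partState N C Q d).1

/-- Residual cost `R_m` of `FindPartition`. -/
def residual {d : ℕ} (N : Fin d → ℕ) (C : Fin d → (Fin d → ℕ) → ℕ → ℕ) (Q : ℕ) (m : ℕ) : ℕ :=
  (partState N C Q m).2

/-- Total cost of a coordinate tuple. -/
def totalCost {d : ℕ} (C : Fin d → (Fin d → ℕ) → ℕ → ℕ) (y : Fin d → ℕ) : ℕ :=
  ∑ m : Fin d, C m y (y m)

/-- Strict lexicographic order on coordinate tuples. -/
def LexLt {d : ℕ} (x y : Fin d → ℕ) : Prop :=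
  ∃ m : Fin d, (∀ k : Fin d, (k : ℕ) < (m : ℕ) → x k = y k) ∧ x m < y m

/-- Reflexive lexicographic order on coordinate tuples. -/
def LexLe {d : ℕ} (x y : Fin d → ℕ) : Prop :=
  LexLt x y ∨ x = y

/-- `Δ` bounds the cost gap between adjacent coordinates at the last level. -/
def LastLevelGapBound {d : ℕ} (N : Fin d → ℕ) (C : Fin d → (Fin d → ℕ) → ℕ → ℕ) (Δ : ℕ) :
    Prop :=
  ∀ (hd : 0 < d) (p : Fin d → ℕ), ValidPrefix N (d - 1) p →
    ∀ x : ℕ, x < N ⟨d - 1, Nat.sub_lt hd Nat.one_pos⟩ →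
      C ⟨d - 1, Nat.sub_lt hd Nat.one_pos⟩ p (x + 1)
        - C ⟨d - 1, Nat.sub_lt hd Nat.one_pos⟩ p x ≤ Δ

/-- The count cost family of a finite set of nonzero coordinates. -/
def countCost {d : ℕ} (N : Fin d → ℕ) (S : Finset ((m : Fin d) → Fin (N m))) :
    Fin d → (Fin d → ℕ) → ℕ → ℕ :=
  fun m p x =>
    (S.filter fun c =>
      (∀ k : Fin d, (k : ℕ) < (m : ℕ) → (c k : ℕ) = p k) ∧ (c m : ℕ) < x).card

/-- The summed count family of finitely many finite sets of nonzero coordinates. -/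
def summedCost {d : ℕ} (N : Fin d → ℕ) {t : ℕ}
    (S : Fin t → Finset ((m : Fin d) → Fin (N m))) :
    Fin d → (Fin d → ℕ) → ℕ → ℕ :=
  fun m p x => ∑ i, countCost N (S i) m p x

theorem lt_apply_findGreatest_succ {f : ℕ → ℕ} {R n : ℕ} (hn : 0 < n) (hR : R < f n) :
    R < f (Nat.findGreatest (fun y => f y ≤ R) (n - 1) + 1) := by
  set x := Nat.findGreatest (fun y => f y ≤ R) (n - 1)
  rcases (Nat.findGreatest_le (n - 1) : x ≤ n - 1).eq_or_lt with hx | hx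
  · rwa [show x + 1 = n by omega]
  · exact not_le.mp (Nat.findGreatest_is_greatest (P := fun y => f y ≤ R) (lt_add_one x) hx)

theorem sum_range_tsub_succ_add {R : ℕ → ℕ} (hR : ∀ i, R (i + 1) ≤ R i) (n : ℕ) :
    ∑ i ∈ range n, (R i - R (i + 1)) + R n = R 0 := by
  induction n with
  | zero => simp
  | succ n ih =>
    have := hR n
    rw [sum_range_succ]
    omega

section FindPartition

variable {d : ℕ} {N : Fin d → ℕ} {C : Fin d → (Fin d → ℕ) → ℕ → ℕ} {Q : ℕ}

variable (N C Q) in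
def partChoice (m : Fin d) : ℕ :=
  Nat.findGreatest (fun y => C m (partState N C Q m).1 y ≤ residual N C Q m) (N m - 1)

theorem partState_succ_fst (m : Fin d) :
    (partState N C Q (m + 1)).1 = Function.update (partState N C Q m).1 m (partChoice N C Q m) := by
  rw [partState, partStep, dif_pos m.isLt]
  rfl

theorem residual_succ (m : Fin d) :
    residual N C Q (m + 1) = residual N C Q m - C m (partState N C Q m).1 (partChoice N C Q m) := by
  rw [residual, partState, partStep, dif_pos m.isLt]
  rfl

theorem residual_succ_le (m : ℕ) : residual N C Q (m + 1) ≤ residual N C Q m := by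
  by_cases hm : m < d
  · exact (residual_succ (N := N) (C := C) (Q := Q) ⟨m, hm⟩).le.trans (Nat.sub_le _ _)
  · simp [residual, partState, partStep, hm]

theorem partState_fst_succ_of_lt {m : ℕ} {k : Fin d} (hk : (k : ℕ) < m) :
    (partState N C Q (m + 1)).1 k = (partState N C Q m).1 k := by
  by_cases hm : m < d
  · rw [show m = ((⟨m, hm⟩ : Fin d) : ℕ) from rfl, partState_succ_fst,
      Function.update_of_ne (Fin.ne_of_lt hk)]
  · simp [partState, partStep, hm]

theorem partState_fst_of_le {m m' : ℕ} (hmm' : m ≤ m') {k : Fin d} (hk : (k : ℕ) < m) :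
    (partState N C Q m').1 k = (partState N C Q m).1 k := by
  induction m', hmm' using Nat.le_induction with
  | base => rfl
  | succ m' hmm' ih => rw [partState_fst_succ_of_lt (by omega), ih]

theorem findPartition_apply (m : Fin d) : findPartition N C Q m = partChoice N C Q m := by
  rw [findPartition, partState_fst_of_le m.isLt (Nat.lt_succ_self m), partState_succ_fst,
    Function.update_self]

theorem partChoice_lt (hN : ∀ m, 1 ≤ N m) (m : Fin d) : partChoice N C Q m < N m :=
  Nat.lt_of_le_pred (hN m) (Nat.findGreatest_le _)

theorem validPrefix_partState (hN : ∀ m, 1 ≤ N m) (m : ℕ) :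
    ValidPrefix N m (partState N C Q m).1 := by
  intro k hk
  rw [partState_fst_of_le hk (Nat.lt_succ_self k), partState_succ_fst, Function.update_self]
  exact partChoice_lt hN k

theorem partChoice_cost_le (hN : ∀ m, 1 ≤ N m) (hZero : IsZeroBased N C) (m : Fin d) :
    C m (partState N C Q m).1 (partChoice N C Q m) ≤ residual N C Q m :=
  Nat.findGreatest_spec (P := fun y => C m (partState N C Q m).1 y ≤ residual N C Q m)
    (Nat.zero_le _) (by simp only [hZero m _ (validPrefix_partState hN m), Nat.zero_le])

theorem residual_lt_partChoice_succ (hN : ∀ m, 1 ≤ N m) {m : Fin d}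
    (hR : residual N C Q m < C m (partState N C Q m).1 (N m)) :
    residual N C Q m < C m (partState N C Q m).1 (partChoice N C Q m + 1) :=
  lt_apply_findGreatest_succ (hN m) hR

theorem residual_lt_cost_extent (hd : 0 < d) (hN : ∀ m, 1 ≤ N m) (hZero : IsZeroBased N C)
    (hHC : IsHierConsistent N C) (hQ : Q < C ⟨0, hd⟩ (fun _ => 0) (N ⟨0, hd⟩)) (m : Fin d) :
    residual N C Q m < C m (partState N C Q m).1 (N m) := by
  obtain ⟨m, hm⟩ := m
  induction m with
  | zero => exact hQ
  | succ m ih =>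
    let l : Fin d := ⟨m, by omega⟩
    have hnext : residual N C Q l < C l (partState N C Q l).1 (partChoice N C Q l + 1) :=
      residual_lt_partChoice_succ hN (ih l.isLt)
    have hcost := partChoice_cost_le (Q := Q) hN hZero l
    have hsplit := hHC l hm (partState N C Q l).1 (validPrefix_partState hN l) _
      (partChoice_lt (C := C) (Q := Q) hN l)
    show residual N C Q (l + 1) < C ⟨l + 1, hm⟩ (partState N C Q (l + 1)).1 (N ⟨l + 1, hm⟩)
    rw [residual_succ, partState_succ_fst]
    omega

theorem totalCost_findPartition_add_residual (hPD : PrefixDep C) (hN : ∀ m, 1 ≤ N m)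
    (hZero : IsZeroBased N C) :
    totalCost C (findPartition N C Q) + residual N C Q d = Q := by
  have hterm : ∀ m : Fin d, C m (findPartition N C Q) (findPartition N C Q m)
      = residual N C Q m - residual N C Q (m + 1) := by
    intro m
    have hcost := partChoice_cost_le (Q := Q) hN hZero m
    rw [findPartition_apply, hPD m (findPartition N C Q) (partState N C Q m).1 _
      (fun k hk => partState_fst_of_le m.isLt.le hk), residual_succ]
    omega
  rw [totalCost, Fintype.sum_congr _ _ hterm,
    Fin.sum_univ_eq_sum_range (fun i => residual N C Q i - residual N C Q (i + 1))]
  exact sum_range_tsub_succ_add residual_succ_le d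

theorem residual_lt_of_lastLevelGapBound (hd : 0 < d) (hN : ∀ m, 1 ≤ N m)
    (hZero : IsZeroBased N C) (hHC : IsHierConsistent N C) {Δ : ℕ}
    (hΔ : LastLevelGapBound N C Δ) (hQ : Q < C ⟨0, hd⟩ (fun _ => 0) (N ⟨0, hd⟩)) :
    residual N C Q d < Δ := by
  let l : Fin d := ⟨d - 1, Nat.sub_lt hd Nat.one_pos⟩
  have hnext : residual N C Q l < C l (partState N C Q l).1 (partChoice N C Q l + 1) :=
    residual_lt_partChoice_succ hN (residual_lt_cost_extent hd hN hZero hHC hQ l)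
  have hcost := partChoice_cost_le (Q := Q) hN hZero l
  have hgap : C l (partState N C Q l).1 (partChoice N C Q l + 1)
      - C l (partState N C Q l).1 (partChoice N C Q l) ≤ Δ :=
    hΔ hd _ (validPrefix_partState hN l) _ (partChoice_lt hN l)
  have hlast := residual_succ (N := N) (C := C) (Q := Q) l
  rw [show (l : ℕ) + 1 = d from Nat.sub_add_cancel hd] at hlast
  omega

end FindPartition

theorem stmt4_general {d : ℕ} (hd : 0 < d) {N : Fin d → ℕ} (hN : ∀ m, 1 ≤ N m)
    (C : Fin d → (Fin d → ℕ) → ℕ → ℕ) (hPD : PrefixDep C)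
    (hZero : IsZeroBased N C) (hHC : IsHierConsistent N C)
    (Δ : ℕ) (hΔ : LastLevelGapBound N C Δ)
    (Q : ℕ) (hQ : Q < C ⟨0, hd⟩ (fun _ => 0) (N ⟨0, hd⟩)) :
    totalCost C (findPartition N C Q) ≤ Q ∧
      Q - totalCost C (findPartition N C Q) < Δ := by
  have hsum := totalCost_findPartition_add_residual (Q := Q) hPD hN hZero
  have hlast := residual_lt_of_lastLevelGapBound hd hN hZero hHC hΔ hQ
  constructor <;> omega

/-- Theorem 3.1, tightness of partitioning: `FindPartition Q` returns a
coordinate whose total cost is at most `Q`, within `Δ` of it. -/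
theorem stmt4 {d : ℕ} (hd : 0 < d) {N : Fin d → ℕ} (hN : ∀ m, 1 ≤ N m)
    (C : Fin d → (Fin d → ℕ) → ℕ → ℕ) (hPD : PrefixDep C)
    (hMono : IsMonotoneFam N C) (hZero : IsZeroBased N C) (hHC : IsHierConsistent N C)
    (Δ : ℕ) (hΔ : LastLevelGapBound N C Δ)
    (Q : ℕ) (hQ : Q < C ⟨0, hd⟩ (fun _ => 0) (N ⟨0, hd⟩)) :
    totalCost C (findPartition N C Q) ≤ Q ∧
      Q - totalCost C (findPartition N C Q) < Δ :=
  stmt4_general hd hN C hPD hZero hHC Δ hΔ Q hQ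

end Nacho
end
end

section
/- Let C be a monotone, zero-based, hierarchically consistent cost family on d dimensions and let Q < C_0(N 0). Then x̄ = FindPartition(Q) satisfies C(x̄) ≤ Q, and every tuple ȳ with y_m ∈ [0, N m) for all m and x̄ <lex ȳ satisfies C(ȳ) > Q; that is, FindPartition(Q) is the lexicographically greatest tuple in the iteration space whose total cost is at most Q. -/
noncomputable section

open scoped Classical
open Finset

namespace Nacho

section Aux

variable {d : ℕ} (N : Fin d → ℕ) (C : Fin d → (Fin d → ℕ) → ℕ → ℕ) (Q : ℕ)

lemma partState_fst_stable (m : ℕ) : ∀ m', m ≤ m' → ∀ k : Fin d, (k : ℕ) < m →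
    (partState N C Q m').1 k = (partState N C Q m).1 k := by
  intro m'
  induction m' with
  | zero => intro h k hk; omega
  | succ m' ih =>
    intro h k hk
    rcases Nat.lt_or_ge m (m' + 1) with h1 | h2
    · have hm' : m ≤ m' := by omega
      show (partStep N C m' (partState N C Q m')).1 k = _
      rw [partStep]
      split_ifs with hdd
      · show Function.update (partState N C Q m').1 ⟨m', hdd⟩ _ k = _
        rw [Function.update_of_ne (Fin.ne_of_val_ne (by simp only [Fin.val_mk]; omega))]
        exact ih hm' k hk
      · exact ih hm' k hk
    · have : m = m' + 1 := by omega
      subst this; rfl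

lemma monoChain (hMono : IsMonotoneFam N C) (m : Fin d) (p : Fin d → ℕ)
    (hp : ValidPrefix N (m : ℕ) p) :
    ∀ b, b ≤ N m → ∀ a, a ≤ b → C m p a ≤ C m p b := by
  intro b
  induction b with
  | zero =>
    intro _ a ha
    have : a = 0 := Nat.le_zero.mp ha
    subst this; exact le_rfl
  | succ b ih =>
    intro hb a ha
    rcases Nat.lt_or_ge a (b + 1) with h1 | h2
    · exact (ih (by omega) a (by omega)).trans (hMono m p hp b (by omega))
    · have : a = b + 1 := by omega
      subst this; exact le_rfl

lemma step_core (hN : ∀ m, 1 ≤ N m) (hZero : IsZeroBased N C) (m : ℕ) (hm : m < d)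
    (hvalid : ∀ k : Fin d, (k : ℕ) < m → (partState N C Q m).1 k < N k)
    (hres : (partState N C Q m).2 < C ⟨m, hm⟩ (partState N C Q m).1 (N ⟨m, hm⟩)) :
    ∃ xm : ℕ,
      (partState N C Q (m + 1)).1
          = Function.update (partState N C Q m).1 ⟨m, hm⟩ xm ∧
      (partState N C Q (m + 1)).2
          = (partState N C Q m).2 - C ⟨m, hm⟩ (partState N C Q m).1 xm ∧
      xm < N ⟨m, hm⟩ ∧
      C ⟨m, hm⟩ (partState N C Q m).1 xm ≤ (partState N C Q m).2 ∧
      (partState N C Q m).2 < C ⟨m, hm⟩ (partState N C Q m).1 (xm + 1) := by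
  set pm := (partState N C Q m).1 with hpm
  set Rm := (partState N C Q m).2 with hRm
  have hvp : ValidPrefix N ((⟨m, hm⟩ : Fin d) : ℕ) pm := fun k hk => hvalid k hk
  set g := Nat.findGreatest (fun y => C ⟨m, hm⟩ pm y ≤ Rm) (N ⟨m, hm⟩ - 1) with hg
  have hstate : partState N C Q (m + 1)
      = (Function.update pm ⟨m, hm⟩ g, Rm - C ⟨m, hm⟩ pm g) := by
    show partStep N C m (partState N C Q m) = _
    rw [partStep, dif_pos hm]
  have hP0 : C ⟨m, hm⟩ pm 0 ≤ Rm := by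
    rw [hZero ⟨m, hm⟩ pm hvp]; exact Nat.zero_le _
  have hspec : C ⟨m, hm⟩ pm g ≤ Rm := by
    rw [hg]
    exact Nat.findGreatest_spec (P := fun y => C ⟨m, hm⟩ pm y ≤ Rm) (Nat.zero_le _) hP0
  have hgle : g ≤ N ⟨m, hm⟩ - 1 := Nat.findGreatest_le _
  have hglt : g < N ⟨m, hm⟩ := by have := hN ⟨m, hm⟩; omega
  refine ⟨g, by rw [hstate], by rw [hstate], hglt, hspec, ?_⟩
  rcases Nat.lt_or_ge (g + 1) (N ⟨m, hm⟩) with h1 | h2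
  · have := Nat.findGreatest_is_greatest (P := fun y => C ⟨m, hm⟩ pm y ≤ Rm)
      (by omega : g < g + 1) (by omega : g + 1 ≤ N ⟨m, hm⟩ - 1)
    omega
  · have : g + 1 = N ⟨m, hm⟩ := by omega
    rw [this]; exact hres

lemma invariant {d : ℕ} (hd : 0 < d) {N : Fin d → ℕ} (hN : ∀ m, 1 ≤ N m)
    (C : Fin d → (Fin d → ℕ) → ℕ → ℕ) (hPD : PrefixDep C)
    (hZero : IsZeroBased N C) (hHC : IsHierConsistent N C)
    (Q : ℕ) (hQ : Q < C ⟨0, hd⟩ (fun _ => 0) (N ⟨0, hd⟩)) :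
    ∀ m, m ≤ d →
      (∀ k : Fin d, (k : ℕ) < m → (partState N C Q m).1 k < N k) ∧
      ((Finset.range m).sum (fun k => if h : k < d then
          C ⟨k, h⟩ (findPartition N C Q) (findPartition N C Q ⟨k, h⟩) else 0)
        + (partState N C Q m).2 = Q) ∧
      (∀ h : m < d,
        (partState N C Q m).2 < C ⟨m, h⟩ (partState N C Q m).1 (N ⟨m, h⟩)) := by
  intro m
  induction m with
  | zero =>
    intro _
    refine ⟨fun k hk => absurd hk (by omega), by simp [partState], fun h => hQ⟩
  | succ m ih =>
    intro hm1
    have hm : m < d := by omega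
    obtain ⟨hvalid, hsum, hres⟩ := ih (by omega)
    obtain ⟨xm, hfst, hsnd, hxlt, hxle, hxgt⟩ :=
      step_core N C Q hN hZero m hm hvalid (hres hm)
    have hxval : findPartition N C Q ⟨m, hm⟩ = xm := by
      rw [findPartition,
        partState_fst_stable N C Q (m + 1) d hm1 ⟨m, hm⟩ (by simp),
        hfst, Function.update_self]
    have hprefix : ∀ k : Fin d, (k : ℕ) < m →
        findPartition N C Q k = (partState N C Q m).1 k := by
      intro k hk
      rw [findPartition, partState_fst_stable N C Q m d (by omega) k hk]
    refine ⟨?_, ?_, ?_⟩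
    · intro k hk
      rw [hfst]
      rcases Nat.lt_or_ge (k : ℕ) m with h1 | h2
      · rw [Function.update_of_ne (Fin.ne_of_val_ne (by simp only [Fin.val_mk]; omega))]
        exact hvalid k h1
      · have : k = (⟨m, hm⟩ : Fin d) := Fin.ext (by simp only [Fin.val_mk]; omega)
        subst this
        rw [Function.update_self]
        exact hxlt
    · rw [Finset.sum_range_succ, dif_pos hm, hxval,
        hPD ⟨m, hm⟩ (findPartition N C Q) (partState N C Q m).1 xm hprefix, hsnd,
        add_assoc, Nat.add_sub_cancel' hxle]
      exact hsum
    · intro h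
      have hhc := hHC ⟨m, hm⟩ h (partState N C Q m).1 (fun k hk => hvalid k hk) xm hxlt
      simp only [Fin.val_mk] at hhc
      rw [hfst, hsnd]
      rw [hhc] at hxgt
      omega

end Aux

/-- `FindPartition Q` is the lexicographically greatest tuple in the iteration
space with total cost at most `Q`. -/
theorem stmt5 {d : ℕ} (hd : 0 < d) {N : Fin d → ℕ} (hN : ∀ m, 1 ≤ N m)
    (C : Fin d → (Fin d → ℕ) → ℕ → ℕ) (hPD : PrefixDep C)
    (hMono : IsMonotoneFam N C) (hZero : IsZeroBased N C) (hHC : IsHierConsistent N C)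
    (Q : ℕ) (hQ : Q < C ⟨0, hd⟩ (fun _ => 0) (N ⟨0, hd⟩)) :
    (∀ m : Fin d, findPartition N C Q m < N m) ∧
    totalCost C (findPartition N C Q) ≤ Q ∧
    ∀ y : Fin d → ℕ, (∀ m : Fin d, y m < N m) →
      LexLt (findPartition N C Q) y → Q < totalCost C y := by
  set x := findPartition N C Q with hxdef
  have hinv := invariant hd hN C hPD hZero hHC Q hQ
  obtain ⟨hvd, hsumd, _⟩ := hinv d le_rfl
  have hxlt : ∀ m : Fin d, x m < N m := by
    intro m
    have := hvd m m.isLt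
    simpa [hxdef, findPartition] using this
  have htc : ∀ z : Fin d → ℕ, totalCost C z
      = ∑ k ∈ Finset.range d, (if h : k < d then C ⟨k, h⟩ z (z ⟨k, h⟩) else 0) := by
    intro z
    rw [totalCost, Finset.sum_range]
    exact Finset.sum_congr rfl fun i _ => by simp
  refine ⟨hxlt, ?_, ?_⟩
  · rw [htc x, hxdef]
    omega
  · rintro y hy ⟨m, hagree, hlt⟩
    obtain ⟨hvalid, hsum, hres⟩ := hinv (m : ℕ) m.isLt.le
    rw [← hxdef] at hsum
    obtain ⟨xm, hfst, hsnd, hxmlt, hxmle, hxmgt⟩ :=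
      step_core N C Q hN hZero (m : ℕ) m.isLt hvalid (hres m.isLt)
    have hmeta : (⟨(m : ℕ), m.isLt⟩ : Fin d) = m := Fin.eta m m.isLt
    have hxval : x m = xm := by
      conv_lhs => rw [hxdef, findPartition, ← hmeta,
        partState_fst_stable N C Q ((m : ℕ) + 1) d m.isLt ⟨(m : ℕ), m.isLt⟩ (by simp)]
      rw [hfst, Function.update_self]
    have hprefix : ∀ k : Fin d, (k : ℕ) < (m : ℕ) →
        (partState N C Q (m : ℕ)).1 k = y k := by
      intro k hk
      rw [← hagree k hk, hxdef, findPartition,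
        partState_fst_stable N C Q (m : ℕ) d m.isLt.le k hk]
    -- the key bound at level m, transported to prefix y
    have hkey : (partState N C Q (m : ℕ)).2 < C m y (y m) := by
      have h1 : C ⟨(m : ℕ), m.isLt⟩ (partState N C Q (m : ℕ)).1 (xm + 1)
          = C m y (xm + 1) := by
        rw [← hmeta]
        exact hPD ⟨(m : ℕ), m.isLt⟩ _ y (xm + 1) hprefix
      have h2 : C m y (xm + 1) ≤ C m y (y m) := by
        refine monoChain N C hMono m y (fun k _ => hy k) (y m) (hy m).le (xm + 1) ?_
        omega
      calc (partState N C Q (m : ℕ)).2 < C ⟨(m : ℕ), m.isLt⟩ (partState N C Q (m : ℕ)).1 (xm + 1) := hxmgt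
        _ = C m y (xm + 1) := h1
        _ ≤ C m y (y m) := h2
    -- partial sums agree between x and y below m
    have hsum_eq : (Finset.range (m : ℕ)).sum (fun k => if h : k < d then
          C ⟨k, h⟩ x (x ⟨k, h⟩) else 0)
        = (Finset.range (m : ℕ)).sum (fun k => if h : k < d then
          C ⟨k, h⟩ y (y ⟨k, h⟩) else 0) := by
      refine Finset.sum_congr rfl fun k hk => ?_
      rw [Finset.mem_range] at hk
      have hkd : k < d := by omega
      rw [dif_pos hkd, dif_pos hkd,
        hagree ⟨k, hkd⟩ hk,
        hPD ⟨k, hkd⟩ x y (y ⟨k, hkd⟩) (fun j hj => hagree j (by simp only [Fin.val_mk] at hj; omega))]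
    have hQlt : Q < (Finset.range (m : ℕ)).sum (fun k => if h : k < d then
          C ⟨k, h⟩ y (y ⟨k, h⟩) else 0) + C m y (y m) := by
      rw [← hsum_eq]
      omega
    have hstep : (Finset.range (m : ℕ)).sum (fun k => if h : k < d then
          C ⟨k, h⟩ y (y ⟨k, h⟩) else 0) + C m y (y m)
        ≤ totalCost C y := by
      rw [htc y]
      have h1 : (Finset.range ((m : ℕ) + 1)).sum (fun k => if h : k < d then
          C ⟨k, h⟩ y (y ⟨k, h⟩) else 0)
          = (Finset.range (m : ℕ)).sum (fun k => if h : k < d then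
          C ⟨k, h⟩ y (y ⟨k, h⟩) else 0) + C m y (y m) := by
        rw [Finset.sum_range_succ, dif_pos m.isLt, hmeta]
      rw [← h1]
      exact Finset.sum_le_sum_of_subset (Finset.range_subset_range.mpr m.isLt)
    omega

end Nacho
end
end

section
/- Let S_1, …, S_t be finite sets of coordinate tuples with Q* = Σ_{i=1}^t |S_i| ≥ 1, let C be their summed count family, and let 0 = Q_0 ≤ Q_1 ≤ … ≤ Q_{P−1} < Q* be query values with boundaries x̄_p = FindPartition(Q_p) computed with respect to C. Then for every i and every c ∈ S_i there is exactly one p < P such that either (p < P−1 and x̄_p ≤lex c <lex x̄_{p+1}) or (p = P−1 and x̄_{P−1} ≤lex c); that is, the lexicographic intervals determined by the partition boundaries cover every nonzero of every operand exactly once. -/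
noncomputable section

open scoped Classical
open Finset

namespace Nacho

/-! ### Auxiliary lemmas -/

section Aux

variable {d : ℕ}

lemma lexLt_trans {x y z : Fin d → ℕ} (h1 : LexLt x y) (h2 : LexLt y z) : LexLt x z := by
  obtain ⟨m, hm, hmx⟩ := h1
  obtain ⟨n, hn, hny⟩ := h2
  rcases lt_trichotomy (m : ℕ) (n : ℕ) with h | h | h
  · exact ⟨m, fun k hk => (hm k hk).trans (hn k (hk.trans h)), hmx.trans_eq (hn m h)⟩
  · have : m = n := Fin.ext h
    subst this
    exact ⟨m, fun k hk => (hm k hk).trans (hn k hk), hmx.trans hny⟩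
  · exact ⟨n, fun k hk => (hm k (hk.trans h)).trans (hn k hk), (hm n h) ▸ hny⟩

lemma lexLt_irrefl (x : Fin d → ℕ) : ¬ LexLt x x := by
  rintro ⟨m, -, hm⟩
  exact lt_irrefl _ hm

lemma lexLt_of_lexLt_of_lexLe {x y z : Fin d → ℕ} (h1 : LexLt x y) (h2 : LexLe y z) :
    LexLt x z := by
  rcases h2 with h2 | rfl
  · exact lexLt_trans h1 h2
  · exact h1

lemma lexLe_trans {x y z : Fin d → ℕ} (h1 : LexLe x y) (h2 : LexLe y z) : LexLe x z := by
  rcases h1 with h1 | rfl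
  · exact Or.inl (lexLt_of_lexLt_of_lexLe h1 h2)
  · exact h2

lemma lex_trichotomy (x y : Fin d → ℕ) : LexLt x y ∨ x = y ∨ LexLt y x := by
  by_cases hxy : x = y
  · exact Or.inr (Or.inl hxy)
  have hne : ∃ m : Fin d, x m ≠ y m := by
    by_contra h
    push_neg at h
    exact hxy (funext h)
  set s : Finset (Fin d) := Finset.univ.filter (fun m => x m ≠ y m) with hs_def
  have hs : s.Nonempty := ⟨hne.choose, by simp [hs_def, hne.choose_spec]⟩
  set m := s.min' hs with hm_def
  have hm : x m ≠ y m := by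
    have := s.min'_mem hs
    simp [hs_def] at this
    exact this
  have hpre : ∀ k : Fin d, (k : ℕ) < (m : ℕ) → x k = y k := by
    intro k hk
    by_contra hne'
    have hk' : m ≤ k := s.min'_le k (by simp [hs_def, hne'])
    exact absurd hk (not_lt.mpr hk')
  rcases lt_or_gt_of_ne hm with h | h
  · exact Or.inl ⟨m, hpre, h⟩
  · exact Or.inr (Or.inr ⟨m, fun k hk => (hpre k hk).symm, h⟩)

variable (N : Fin d → ℕ) (C : Fin d → (Fin d → ℕ) → ℕ → ℕ) (Q : ℕ)

lemma partState_succ (m : ℕ) :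
    partState N C Q (m + 1) = partStep N C m (partState N C Q m) := rfl

lemma partState_stable {m : ℕ} :
    ∀ {j : ℕ}, m ≤ j → ∀ k : Fin d, (k : ℕ) < m →
      (partState N C Q j).1 k = (partState N C Q m).1 k := by
  intro j
  induction j with
  | zero =>
    intro hj k hk
    exact absurd hk (by omega)
  | succ j ih =>
    intro hj k hk
    rcases Nat.eq_or_lt_of_le hj with he | hlt
    · rw [he]
    · have hj' : m ≤ j := Nat.lt_succ_iff.mp hlt
      have hkj : (k : ℕ) < j := lt_of_lt_of_le hk hj'
      rw [partState_succ, partStep]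
      split
      · next h =>
        have hne : k ≠ (⟨j, h⟩ : Fin d) := Fin.ne_of_val_ne (show (k:ℕ) ≠ j by omega)
        simp only [Function.update_of_ne hne]
        exact ih hj' k hk
      · exact ih hj' k hk

lemma findPartition_coord (k : Fin d) :
    findPartition N C Q k = (partState N C Q ((k : ℕ) + 1)).1 k :=
  partState_stable N C Q (Nat.succ_le_of_lt k.isLt) k (Nat.lt_succ_self _)

lemma findPartition_apply_s14 (k : Fin d) :
    findPartition N C Q k
      = Nat.findGreatest
          (fun y => C k (partState N C Q (k : ℕ)).1 y ≤ (partState N C Q (k : ℕ)).2)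
          (N k - 1) := by
  rw [findPartition_coord, partState_succ, partStep]
  split
  · next h =>
    have : (⟨(k : ℕ), h⟩ : Fin d) = k := Fin.eta k h
    simp [this]
  · next h => exact absurd k.isLt h

lemma residual_zero : ∀ m : ℕ, (partState N C 0 m).2 = 0 := by
  intro m
  induction m with
  | zero => rfl
  | succ m ih =>
    rw [partState_succ, partStep]
    split
    · simp [ih]
    · exact ih

lemma findPartition_mono {Q Q' : ℕ} (hQQ : Q ≤ Q') :
    LexLe (findPartition N C Q) (findPartition N C Q') := by
  have key : ∀ m : ℕ,
      ((partState N C Q m).1 = (partState N C Q' m).1 ∧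
        (partState N C Q m).2 ≤ (partState N C Q' m).2) ∨
      LexLt (findPartition N C Q) (findPartition N C Q') := by
    intro m
    induction m with
    | zero => exact Or.inl ⟨rfl, hQQ⟩
    | succ m ih =>
      rcases ih with ⟨heq, hle⟩ | hlt
      · rw [partState_succ, partState_succ, partStep, partStep]
        split
        · next h =>
          set st := partState N C Q m with hst
          set st' := partState N C Q' m with hst'
          set x := Nat.findGreatest (fun y => C ⟨m, h⟩ st.1 y ≤ st.2) (N ⟨m, h⟩ - 1) with hx
          set x' := Nat.findGreatest (fun y => C ⟨m, h⟩ st'.1 y ≤ st'.2) (N ⟨m, h⟩ - 1)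
            with hx'
          have hxx : x ≤ x' := by
            refine Nat.findGreatest_mono (fun n hn => ?_) le_rfl
            rw [← heq]
            exact hn.trans hle
          rcases eq_or_lt_of_le hxx with he | hl
          · left
            constructor
            · rw [heq, he]
            · rw [heq, he]
              exact Nat.sub_le_sub_right hle _
          · right
            refine ⟨⟨m, h⟩, fun k hk => ?_, ?_⟩
            · have e1 : findPartition N C Q k = st.1 k :=
                partState_stable N C Q (le_of_lt h) k hk
              have e2 : findPartition N C Q' k = st'.1 k :=
                partState_stable N C Q' (le_of_lt h) k hk
              rw [e1, e2, heq]
            · have e1 : findPartition N C Q ⟨m, h⟩ = x := by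
                rw [findPartition_coord, partState_succ, partStep]
                split
                · next h2 =>
                  simp only
                  rw [Function.update_self]
                · next h2 => exact absurd h h2
              have e2 : findPartition N C Q' ⟨m, h⟩ = x' := by
                rw [findPartition_coord, partState_succ, partStep]
                split
                · next h2 =>
                  simp only
                  rw [Function.update_self]
                · next h2 => exact absurd h h2
              rw [e1, e2]
              exact hl
        · exact Or.inl ⟨heq, hle⟩
      · exact Or.inr hlt
  rcases key d with ⟨heq, -⟩ | hlt
  · right
    unfold findPartition
    rw [heq]
  · exact Or.inl hlt

/-- At query `0`, the partition boundary is lex-below every nonzero. -/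
lemma findPartition_zero_le {t : ℕ} {N : Fin d → ℕ}
    (S : Fin t → Finset ((m : Fin d) → Fin (N m))) {i : Fin t}
    {c : (m : Fin d) → Fin (N m)} (hc : c ∈ S i) :
    LexLe (findPartition N (summedCost N S) 0) (fun m => (c m : ℕ)) := by
  rcases lex_trichotomy (findPartition N (summedCost N S) 0) (fun m => (c m : ℕ)) with
    h | h | h
  · exact Or.inl h
  · exact Or.inr h
  · exfalso
    obtain ⟨m, hpre, hm⟩ := h
    set CC := summedCost N S with hCC
    set p := (partState N CC 0 (m : ℕ)).1 with hp
    have hxm := findPartition_apply_s14 N CC 0 m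
    have hR : (partState N CC 0 (m : ℕ)).2 = 0 := residual_zero N CC _
    have hpos : findPartition N CC 0 m ≠ 0 := by
      intro h0
      rw [h0] at hm
      exact Nat.not_lt_zero _ hm
    have hspec : CC m p (findPartition N CC 0 m) ≤ (partState N CC 0 (m : ℕ)).2 :=
      Nat.findGreatest_of_ne_zero
        (P := fun y => CC m p y ≤ (partState N CC 0 (m : ℕ)).2) hxm.symm hpos
    rw [hR, Nat.le_zero] at hspec
    have hcount : countCost N (S i) m p (findPartition N CC 0 m) = 0 := by
      have := (Finset.sum_eq_zero_iff).mp hspec i (Finset.mem_univ i)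
      exact this
    have hmem : c ∈ (S i).filter fun c' =>
        (∀ k : Fin d, (k : ℕ) < (m : ℕ) → (c' k : ℕ) = p k) ∧
          (c' m : ℕ) < findPartition N CC 0 m := by
      refine Finset.mem_filter.mpr ⟨hc, fun k hk => ?_, hm⟩
      have : findPartition N CC 0 k = p k :=
        partState_stable N CC 0 (le_of_lt m.isLt) k hk
      rw [← this]
      exact hpre k hk
    have : 0 < countCost N (S i) m p (findPartition N CC 0 m) :=
      Finset.card_pos.mpr ⟨c, hmem⟩
    omega

end Aux

/-- the lexicographic intervals determined by the partition boundaries of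
monotone queries `0 = Q_0 ≤ Q_1 ≤ … ≤ Q_{P-1} < Q*` cover every nonzero of every operand
exactly once. -/
theorem stmt14 {d : ℕ} (hd : 0 < d) {N : Fin d → ℕ} (hN : ∀ m, 1 ≤ N m)
    {t : ℕ} (S : Fin t → Finset ((m : Fin d) → Fin (N m)))
    (hQstar : 1 ≤ ∑ i, (S i).card)
    (P : ℕ) (hP : 1 ≤ P) (Q : ℕ → ℕ) (hQ0 : Q 0 = 0)
    (hQmono : ∀ p : ℕ, p + 1 < P → Q p ≤ Q (p + 1))
    (hQlt : ∀ p : ℕ, p < P → Q p < ∑ i, (S i).card) :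
    ∀ i : Fin t, ∀ c ∈ S i,
      ∃! p : ℕ, p < P ∧
        ((p + 1 < P ∧
            LexLe (findPartition N (summedCost N S) (Q p)) (fun m => (c m : ℕ)) ∧
            LexLt (fun m => (c m : ℕ)) (findPartition N (summedCost N S) (Q (p + 1)))) ∨
          (p = P - 1 ∧
            LexLe (findPartition N (summedCost N S) (Q (P - 1))) (fun m => (c m : ℕ)))) := by
  intro i c hc
  set CC := summedCost N S with hCC
  set fp : ℕ → Fin d → ℕ := fun q => findPartition N CC q with hfp
  set cN : Fin d → ℕ := fun m => (c m : ℕ) with hcN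
  have hA0 : LexLe (fp (Q 0)) cN := by
    rw [hQ0]
    exact findPartition_zero_le S hc
  have hQmono' : ∀ a b : ℕ, a ≤ b → b < P → Q a ≤ Q b := by
    intro a b hab hbP
    induction b with
    | zero =>
      have : a = 0 := Nat.le_zero.mp hab
      rw [this]
    | succ b ih =>
      rcases Nat.eq_or_lt_of_le hab with he | hlt
      · rw [he]
      · have h1 : Q a ≤ Q b := ih (Nat.lt_succ_iff.mp hlt) (by omega)
        exact h1.trans (hQmono b hbP)
  have hfp_mono : ∀ a b : ℕ, a ≤ b → b < P → LexLe (fp (Q a)) (fp (Q b)) := by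
    intro a b hab hbP
    exact findPartition_mono N CC (hQmono' a b hab hbP)
  set s : Finset ℕ := (Finset.range P).filter (fun p => LexLe (fp (Q p)) cN) with hs_def
  have hs : s.Nonempty := ⟨0, by simp [hs_def]; exact ⟨hP, hA0⟩⟩
  set ps := s.max' hs with hps
  obtain ⟨hpP', hAp⟩ := Finset.mem_filter.mp (s.max'_mem hs)
  have hpP : ps < P := Finset.mem_range.mp hpP'
  have hmax : ∀ q : ℕ, q < P → LexLe (fp (Q q)) cN → q ≤ ps := by
    intro q hqP hAq
    exact s.le_max' q (Finset.mem_filter.mpr ⟨Finset.mem_range.mpr hqP, hAq⟩)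
  refine ⟨ps, ⟨hpP, ?_⟩, ?_⟩
  · by_cases hlast : ps + 1 < P
    · left
      refine ⟨hlast, hAp, ?_⟩
      have hnot : ¬ LexLe (fp (Q (ps + 1))) cN := by
        intro hA
        have := hmax _ hlast hA
        omega
      rcases lex_trichotomy cN (fp (Q (ps + 1))) with h | h | h
      · exact h
      · exact absurd (Or.inr h.symm) hnot
      · exact absurd (Or.inl h) hnot
    · right
      have he : ps = P - 1 := by omega
      exact ⟨he, he ▸ hAp⟩
  · rintro q ⟨hqP, hcase⟩
    have hAq : LexLe (fp (Q q)) cN := by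
      rcases hcase with ⟨-, h1, -⟩ | ⟨he, h1⟩
      · exact h1
      · rw [he]
        exact h1
    have hqle : q ≤ ps := hmax q hqP hAq
    rcases eq_or_lt_of_le hqle with he | hlt
    · exact he
    · exfalso
      rcases hcase with ⟨hq1, -, hlt2⟩ | ⟨he, -⟩
      · have h1 : LexLe (fp (Q (q + 1))) (fp (Q ps)) := hfp_mono (q + 1) ps (by omega) hpP
        have h2 : LexLt cN cN :=
          lexLt_of_lexLt_of_lexLe (lexLt_of_lexLt_of_lexLe hlt2 h1) hAp
        exact lexLt_irrefl _ h2
      · omega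

end Nacho
end
end
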